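/- Let R be a commutative ring, ρ : ℤ^r → ℤ^m a surjective group homomorphism, and f ∈ R[ℤ^r] a Laurent polynomial. For any group homomorphism s : ℤ^m → ℤ^r with ρ ∘ s = id, let φ_s : R[ℤ^r] → (R[ℤ^r])[ℤ^m] be the R-linear map sending the monomial with exponent λ ∈ ℤ^r to the monomial with exponent ρ(λ) ∈ ℤ^m whose coefficient is the monomial with exponent λ − s(ρ(λ)) in R[ℤ^r]. Then the set of points of ℤ^m at which φ_s(f) has nonzero coefficient equals ρ(supp(f)); consequently the Newton polytope of φ_s(f) in ℝ^m equals the convex hull of the image of supp(f) under the ℝ-linear extension of ρ, and in particular it does not depend on the choice of the section s. -/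

import Mathlib

/-- The canonical embedding `ℤ^m → ℝ^m`. -/
noncomputable def latticeEmbed {m : ℕ} (l : Fin m → ℤ) : Fin m → ℝ :=
  fun i => (l i : ℝ)

/-- The Newton polytope of a Laurent polynomial `f ∈ R[ℤ^m]` (here with coefficients in any
commutative ring `S`, e.g. `S = R[ℤ^r]`): the convex hull in `ℝ^m` of the image of its support. -/
noncomputable def newtonPolytope {S : Type*} [CommRing S] {m : ℕ}
    (f : AddMonoidAlgebra S (Fin m → ℤ)) : Set (Fin m → ℝ) :=
  convexHull ℝ (latticeEmbed '' (f.coeff.support : Set (Fin m → ℤ)))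

/-- Given a splitting `s` of the surjection `ρ : ℤ^r → ℤ^m`, the map
`φ_s : R[ℤ^r] → (R[ℤ^r])[ℤ^m]` sending the monomial of exponent `λ` to the monomial of exponent
`ρ(λ)` whose coefficient is the monomial of exponent `λ - s(ρ(λ))`. -/
noncomputable def splitMap {R : Type*} [CommRing R] {r m : ℕ}
    (ρ : (Fin r → ℤ) →+ (Fin m → ℤ)) (s : (Fin m → ℤ) →+ (Fin r → ℤ))
    (f : AddMonoidAlgebra R (Fin r → ℤ)) :
    AddMonoidAlgebra (AddMonoidAlgebra R (Fin r → ℤ)) (Fin m → ℤ) :=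
  f.coeff.sum fun l a => AddMonoidAlgebra.single (ρ l) (AddMonoidAlgebra.single (l - s (ρ l)) a)


/-!
The monomial of exponent `λ` is sent to the monomial of bidegree `(ρ λ, λ - s (ρ λ))`, and
`λ ↦ (ρ λ, λ - s (ρ λ))` is injective for any `s` (`λ` is recovered as the sum of the two parts),
so no cancellation occurs: the `ℤ^m`-support of `φ_s f` is exactly `ρ (supp f)`, whatever `s` is.
-/

section SplitMap

variable {R : Type*} [CommRing R] {r m : ℕ}
  (ρ : (Fin r → ℤ) →+ (Fin m → ℤ)) (s : (Fin m → ℤ) →+ (Fin r → ℤ))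
  (f : AddMonoidAlgebra R (Fin r → ℤ))

lemma coeff_coeff_splitMap (μ : Fin m → ℤ) (ν : Fin r → ℤ) :
    ((splitMap ρ s f).coeff μ).coeff ν = if ρ (ν + s μ) = μ then f.coeff (ν + s μ) else 0 := by
  have hexponent (l : Fin r → ℤ) :
      (ρ l = μ ∧ l - s (ρ l) = ν) ↔ (ν + s μ = l ∧ ρ (ν + s μ) = μ) := by
    constructor
    · rintro ⟨rfl, rfl⟩
      simp
    · rintro ⟨rfl, h⟩
      simp [h]
  simp only [splitMap, Finsupp.sum, AddMonoidAlgebra.coeff_sum, Finsupp.finsetSum_apply,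
    AddMonoidAlgebra.coeff_single, Finsupp.single_apply,
    apply_ite (fun p : AddMonoidAlgebra R (Fin r → ℤ) => p.coeff ν),
    AddMonoidAlgebra.coeff_zero, Finsupp.coe_zero, Pi.zero_apply, ← ite_and]
  simp only [hexponent, ite_and, Finset.sum_ite_eq]
  split_ifs <;> simp_all

lemma support_splitMap :
    ((splitMap ρ s f).coeff.support : Set (Fin m → ℤ)) = ρ '' (f.coeff.support : Set (Fin r → ℤ)) := by
  ext μ
  simp only [Finset.mem_coe, Finsupp.mem_support_iff, Set.mem_image, ne_eq,
    ← AddMonoidAlgebra.coeff_eq_zero, DFunLike.ext_iff, not_forall, coeff_coeff_splitMap,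
    Finsupp.coe_zero, Pi.zero_apply, ite_eq_right_iff]
  constructor
  · rintro ⟨ν, hρ, hf⟩
    exact ⟨ν + s μ, hf, hρ⟩
  · rintro ⟨l, hf, rfl⟩
    exact ⟨l - s (ρ l), by simpa using hf⟩

lemma newtonPolytope_splitMap :
    newtonPolytope (splitMap ρ s f)
      = convexHull ℝ (latticeEmbed '' (ρ '' (f.coeff.support : Set (Fin r → ℤ)))) := by
  rw [newtonPolytope, support_splitMap]

end SplitMap

theorem support_splitMap_and_newtonPolytope_indep_general {R : Type*} [CommRing R] {r m : ℕ}
    (ρ : (Fin r → ℤ) →+ (Fin m → ℤ))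
    (s : (Fin m → ℤ) →+ (Fin r → ℤ))
    (f : AddMonoidAlgebra R (Fin r → ℤ)) :
    ((splitMap ρ s f).coeff.support : Set (Fin m → ℤ)) = ρ '' (f.coeff.support : Set (Fin r → ℤ)) ∧
    newtonPolytope (splitMap ρ s f)
      = convexHull ℝ (latticeEmbed '' (ρ '' (f.coeff.support : Set (Fin r → ℤ)))) ∧
    ∀ s' : (Fin m → ℤ) →+ (Fin r → ℤ), (∀ μ, ρ (s' μ) = μ) →
      newtonPolytope (splitMap ρ s' f) = newtonPolytope (splitMap ρ s f) := by
  refine ⟨support_splitMap ρ s f, newtonPolytope_splitMap ρ s f, fun s' _ => ?_⟩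
  rw [newtonPolytope_splitMap, newtonPolytope_splitMap]

theorem support_splitMap_and_newtonPolytope_indep {R : Type*} [CommRing R] {r m : ℕ}
    (ρ : (Fin r → ℤ) →+ (Fin m → ℤ)) (hρ : Function.Surjective ρ)
    (s : (Fin m → ℤ) →+ (Fin r → ℤ)) (hs : ∀ μ, ρ (s μ) = μ)
    (f : AddMonoidAlgebra R (Fin r → ℤ)) :
    ((splitMap ρ s f).coeff.support : Set (Fin m → ℤ)) = ρ '' (f.coeff.support : Set (Fin r → ℤ)) ∧
    newtonPolytope (splitMap ρ s f)
      = convexHull ℝ (latticeEmbed '' (ρ '' (f.coeff.support : Set (Fin r → ℤ)))) ∧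
    ∀ s' : (Fin m → ℤ) →+ (Fin r → ℤ), (∀ μ, ρ (s' μ) = μ) →
      newtonPolytope (splitMap ρ s' f) = newtonPolytope (splitMap ρ s f) :=
  support_splitMap_and_newtonPolytope_indep_general ρ s f
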